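/- Let k ≥ 2 be an integer. If τ is a symmetric polynomial matrix whose entries have total degree at most k−1 and the polynomial xᵀ τ x = Σ_{i,j} Xᵢ·τ_{ij}·Xⱼ is zero, then there exists a polynomial vector field v = (v₁, v₂) with components of total degree at most k−2 such that τ = sym(x^⊥ ⊗ v). -/

import Mathlib

open MvPolynomial Matrix

/-- Real polynomials in two variables. -/
abbrev P2 := MvPolynomial (Fin 2) ℝ

/-- The matrix `curl v` of a polynomial vector field, defined row-wise:
`(curl v)_{i1} = ∂₂ vᵢ`, `(curl v)_{i2} = -∂₁ vᵢ`. -/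
noncomputable def pcurl (v : Fin 2 → P2) : Matrix (Fin 2) (Fin 2) P2 :=
  Matrix.of fun i j =>
    if j = 0 then pderiv (1 : Fin 2) (v i) else -(pderiv (0 : Fin 2) (v i))

/-- `sym curl v := (curl v + (curl v)ᵀ)/2`. -/
noncomputable def psymCurl (v : Fin 2 → P2) : Matrix (Fin 2) (Fin 2) P2 :=
  (1 / 2 : ℝ) • (pcurl v + (pcurl v)ᵀ)

/-- `div div τ := Σ_{i,j} ∂ᵢ∂ⱼ τ_{ij}`. -/
noncomputable def pdivDiv (τ : Matrix (Fin 2) (Fin 2) P2) : P2 :=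
  ∑ i : Fin 2, ∑ j : Fin 2, pderiv i (pderiv j (τ i j))

/-- The matrix `x xᵀ q` with `(i,j)`-entry `Xᵢ · Xⱼ · q`. -/
noncomputable def xxT (q : P2) : Matrix (Fin 2) (Fin 2) P2 :=
  Matrix.of fun i j => X i * X j * q

/-- The polynomial vector `x^⊥ = (X₂, -X₁)`. -/
noncomputable def xPerp : Fin 2 → P2 := ![X 1, -X 0]

/-- `rot τ`, with components `(rot τ)ᵢ = ∂₁ τ_{i2} - ∂₂ τ_{i1}`. -/
noncomputable def prot (τ : Matrix (Fin 2) (Fin 2) P2) : Fin 2 → P2 :=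
  fun i => pderiv (0 : Fin 2) (τ i 1) - pderiv (1 : Fin 2) (τ i 0)

/-- The Hessian matrix `∇²q` with entries `∂ᵢ∂ⱼ q`. -/
noncomputable def phess (q : P2) : Matrix (Fin 2) (Fin 2) P2 :=
  Matrix.of fun i j => pderiv i (pderiv j q)

/-- `sym(x^⊥ ⊗ v)`, the symmetric matrix with `(i,j)`-entry
`((x^⊥)ᵢ vⱼ + vᵢ (x^⊥)ⱼ)/2`. -/
noncomputable def symTen (v : Fin 2 → P2) : Matrix (Fin 2) (Fin 2) P2 :=
  Matrix.of fun i j => (1 / 2 : ℝ) • (xPerp i * v j + v i * xPerp j)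

/-- The gradient matrix `∇v` with entries `(∇v)_{ij} = ∂ⱼ vᵢ`. -/
noncomputable def pgrad (v : Fin 2 → P2) : Matrix (Fin 2) (Fin 2) P2 :=
  Matrix.of fun i j => pderiv j (v i)

/-- The symmetric gradient `def v := (∇v + (∇v)ᵀ)/2`. -/
noncomputable def pdef (v : Fin 2 → P2) : Matrix (Fin 2) (Fin 2) P2 :=
  (1 / 2 : ℝ) • (pgrad v + (pgrad v)ᵀ)

/-- The matrix `x^⊥ (x^⊥)ᵀ q` with `(i,j)`-entry `(x^⊥)ᵢ (x^⊥)ⱼ q`. -/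
noncomputable def xPerpxPerpT (q : P2) : Matrix (Fin 2) (Fin 2) P2 :=
  Matrix.of fun i j => xPerp i * xPerp j * q

/-- `rot rot τ := ∂₁(rot τ)₂ − ∂₂(rot τ)₁`. -/
noncomputable def protRot (τ : Matrix (Fin 2) (Fin 2) P2) : P2 :=
  pderiv (0 : Fin 2) (prot τ 1) - pderiv (1 : Fin 2) (prot τ 0)

/-!
Write `xᵀ τ x = X₀² τ₀₀ + 2 X₀ X₁ τ₀₁ + X₁² τ₁₁`. Since `X₀` and `X₁` are non-associate primes,
its vanishing forces `X₁ ∣ τ₀₀` and `X₀ ∣ τ₁₁`, say `τ₀₀ = X₁ a` and `τ₁₁ = X₀ b`; cancelling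
`X₀ X₁` then gives `2 τ₀₁ = -(X₀ a + X₁ b)`, which says exactly `τ = sym(x^⊥ ⊗ (a, -b))`.
Dividing by a variable lowers the total degree by one.
-/

namespace MvPolynomial

variable {σ R : Type*} [CommRing R] [IsDomain R]

lemma X_dvd_of_X_dvd_X_mul {i j : σ} (hij : i ≠ j) {p : MvPolynomial σ R}
    (h : X i ∣ X j * p) : X i ∣ p :=
  (X_prime.dvd_or_dvd h).resolve_left (by rwa [X_dvd_X])

lemma totalDegree_le_sub_one_of_X_mul_le {i : σ} {p : MvPolynomial σ R} {n : ℕ}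
    (h : (X i * p).totalDegree ≤ n) : p.totalDegree ≤ n - 1 := by
  rcases eq_or_ne p 0 with rfl | hp
  · simp
  · rw [totalDegree_mul_of_isDomain (X_ne_zero i) hp, totalDegree_X] at h
    omega

end MvPolynomial

lemma C_inv_two_mul_two : (C 2⁻¹ : P2) * 2 = 1 := by
  rw [← map_ofNat C 2, ← C_mul, inv_mul_cancel₀ two_ne_zero, C_1]

lemma symTen_eq (v : Fin 2 → P2) :
    symTen v = !![X 1 * v 0, C 2⁻¹ * (X 1 * v 1 - X 0 * v 0);
      C 2⁻¹ * (X 1 * v 1 - X 0 * v 0), -(X 0 * v 1)] := by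
  refine Matrix.ext fun i j => ?_
  fin_cases i <;> fin_cases j <;>
    simp only [symTen, xPerp, one_div, smul_add, smul_eq_C_mul, of_apply, cons_val',
      cons_val_zero, cons_val_one, cons_val_fin_one, Fin.zero_eta, Fin.mk_one, Fin.isValue,
      neg_mul, mul_neg]
  · linear_combination X 1 * v 0 * C_inv_two_mul_two
  · ring
  · ring
  · linear_combination -(X 0 * v 1) * C_inv_two_mul_two

lemma exists_eq_symTen_of_sum_mul_eq_zero {τ : Matrix (Fin 2) (Fin 2) P2} (hsym : τᵀ = τ)
    (h : ∑ i : Fin 2, ∑ j : Fin 2, X i * τ i j * X j = 0) : ∃ v, τ = symTen v := by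
  have h10 : τ 1 0 = τ 0 1 := congrFun (congrFun hsym 0) 1
  simp only [Fin.sum_univ_two, h10] at h
  have h01 : (1 : Fin 2) ≠ 0 := by decide
  obtain ⟨a, ha⟩ : X 1 ∣ τ 0 0 := X_dvd_of_X_dvd_X_mul h01 <| X_dvd_of_X_dvd_X_mul h01
    ⟨-(2 * X 0 * τ 0 1 + X 1 * τ 1 1), by linear_combination h⟩
  obtain ⟨b, hb⟩ : X 0 ∣ τ 1 1 := X_dvd_of_X_dvd_X_mul h01.symm <| X_dvd_of_X_dvd_X_mul h01.symm
    ⟨-(X 0 * τ 0 0 + 2 * X 1 * τ 0 1), by linear_combination h⟩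
  have hcross : X 0 * a + 2 * τ 0 1 + X 1 * b = 0 := by
    have : X 0 * X 1 * (X 0 * a + 2 * τ 0 1 + X 1 * b) = 0 := by
      linear_combination h - X 0 * X 0 * ha - X 1 * X 1 * hb
    exact (mul_eq_zero.mp this).resolve_left (mul_ne_zero (X_ne_zero 0) (X_ne_zero 1))
  refine ⟨![a, -b], Matrix.ext fun i j => ?_⟩
  rw [symTen_eq]
  fin_cases i <;> fin_cases j <;>
    simp only [of_apply, cons_val', cons_val_zero, cons_val_one, cons_val_fin_one,
      Fin.zero_eta, Fin.mk_one, Fin.isValue, mul_neg, neg_neg]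
  · exact ha
  · linear_combination C 2⁻¹ * hcross - τ 0 1 * C_inv_two_mul_two
  · linear_combination h10 + C 2⁻¹ * hcross - τ 0 1 * C_inv_two_mul_two
  · linear_combination hb

theorem stmt_14_general (k : ℕ) (τ : Matrix (Fin 2) (Fin 2) P2)
    (hsym : τᵀ = τ) (hdeg : ∀ i j, (τ i j).totalDegree ≤ k - 1)
    (h : ∑ i : Fin 2, ∑ j : Fin 2, X i * τ i j * X j = 0) :
    ∃ v : Fin 2 → P2, (∀ i, (v i).totalDegree ≤ k - 2) ∧ τ = symTen v := by
  obtain ⟨v, rfl⟩ := exists_eq_symTen_of_sum_mul_eq_zero hsym h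
  refine ⟨v, fun i => ?_, rfl⟩
  have h00 : (X 1 * v 0).totalDegree ≤ k - 1 := by simpa [symTen_eq] using hdeg 0 0
  have h11 : (X 0 * v 1).totalDegree ≤ k - 1 := by simpa [symTen_eq] using hdeg 1 1
  fin_cases i
  · exact totalDegree_le_sub_one_of_X_mul_le h00
  · exact totalDegree_le_sub_one_of_X_mul_le h11

/-- If a symmetric polynomial matrix of degree ≤ k−1 satisfies `xᵀ τ x = 0`,
then `τ = sym(x^⊥ ⊗ v)` for a polynomial vector field `v` of degree ≤ k−2. -/
theorem stmt_14 (k : ℕ) (hk : 2 ≤ k) (τ : Matrix (Fin 2) (Fin 2) P2)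
    (hsym : τᵀ = τ) (hdeg : ∀ i j, (τ i j).totalDegree ≤ k - 1)
    (h : ∑ i : Fin 2, ∑ j : Fin 2, X i * τ i j * X j = 0) :
    ∃ v : Fin 2 → P2, (∀ i, (v i).totalDegree ≤ k - 2) ∧ τ = symTen v :=
  stmt_14_general k τ hsym hdeg h
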